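/- arXiv:1604.06098 — 8 statements merged into one kernel-verified Lean document; each statement's English description precedes it below -/
import Mathlib

section
/- Let D ≥ 2 be a square-free integer. Suppose some positive integer d₀ satisfies that the square-free part of (d₀-1)² - 4 equals D. Then there exist infinitely many positive integers d such that the square-free part of (d-1)² - 4 = (d+1)(d-3) equals D. -/
/-!
Writing `x = d - 1`, the condition says that `(x + k√D)/2` is a unit of norm `1`. Squaring it
gives the solution `x' = x² - 2`, `k' = x k`, i.e. `d' = (d - 1)² - 1`, and `d' > d` as soon
as `d > 3`, which the equation forces. A nonempty set of integers in which every element is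
exceeded by another element is infinite.
-/

lemma Set.infinite_of_nonempty_of_forall_mem_exists_gt {α : Type*} [Preorder α] {s : Set α}
    (hs : s.Nonempty) (h : ∀ a ∈ s, ∃ b ∈ s, a < b) : s.Infinite := by
  intro hfin
  obtain ⟨a, ha⟩ := hs
  obtain ⟨b, -, hb⟩ := hfin.exists_le_maximal ha
  obtain ⟨c, hc, hbc⟩ := h b hb.prop
  exact hbc.not_ge (hb.2 hc hbc.le)

lemma three_lt_of_sq_sub_four_eq {D d k : ℤ} (hD : 0 < D) (hd : 0 < d) (hk : 0 < k)
    (h : (d - 1) ^ 2 - 4 = D * k ^ 2) : 3 < d := by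
  nlinarith [mul_pos hD (pow_pos hk 2)]

lemma sq_sub_four_eq_of_sq_sub_four_eq {D d k : ℤ} (h : (d - 1) ^ 2 - 4 = D * k ^ 2) :
    ((d - 1) ^ 2 - 1 - 1) ^ 2 - 4 = D * ((d - 1) * k) ^ 2 := by
  linear_combination (d - 1) ^ 2 * h

theorem stmt_1_general (D : ℤ) (hD2 : 2 ≤ D)
    (h0 : ∃ d₀ : ℤ, 0 < d₀ ∧ ∃ k : ℤ, 0 < k ∧ (d₀ - 1) ^ 2 - 4 = D * k ^ 2) :
    {d : ℤ | 0 < d ∧ ∃ k : ℤ, 0 < k ∧ (d - 1) ^ 2 - 4 = D * k ^ 2}.Infinite := by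
  refine Set.infinite_of_nonempty_of_forall_mem_exists_gt h0 ?_
  rintro d ⟨hd, k, hk, hdk⟩
  have hd3 : 3 < d := three_lt_of_sq_sub_four_eq (by omega) hd hk hdk
  refine ⟨(d - 1) ^ 2 - 1, ⟨by nlinarith, (d - 1) * k, mul_pos (by omega) hk, ?_⟩, by nlinarith⟩
  exact sq_sub_four_eq_of_sq_sub_four_eq hdk

/-- If some positive integer `d₀` has squarefree part of `(d₀-1)^2-4`
equal to `D` (with `D ≥ 2` squarefree), then infinitely many positive integers `d`
have squarefree part of `(d-1)^2-4` equal to `D`. -/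
theorem stmt_1 (D : ℤ) (hD2 : 2 ≤ D) (hDsf : Squarefree D)
    (h0 : ∃ d₀ : ℤ, 0 < d₀ ∧ ∃ k : ℤ, 0 < k ∧ (d₀ - 1) ^ 2 - 4 = D * k ^ 2) :
    {d : ℤ | 0 < d ∧ ∃ k : ℤ, 0 < k ∧ (d - 1) ^ 2 - 4 = D * k ^ 2}.Infinite :=
  stmt_1_general D hD2 h0
end

section
/- Define polynomials T*_n by T*_0(x) = 3, T*_1(x) = x, and T*_n(x) = x·T*_{n-1}(x) - x·T*_{n-2}(x) + T*_{n-3}(x) for n ≥ 3 (extended to T*_2(x) = x² - 2x via the recursion, i.e., T*_2(x) = x(x-2)). Then T*_n(x) = 1 + 2·T_n((x-1)/2), where T_n is the n-th Chebyshev polynomial of the first kind. -/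
/-!
The sequence `T*ₙ` satisfies a linear recurrence with characteristic polynomial
`t³ - x t² + x t - 1 = (t - 1)(t² - (x - 1) t + 1)`. The factor `t - 1` contributes the constant
`1`, and the factor `t² - (x - 1) t + 1` is the recurrence of the Vieta–Lucas polynomials
`Cₙ(x - 1) = 2 Tₙ((x - 1)/2)`. So both sides solve the same third-order recurrence, and they agree
for `n = 0, 1, 2`.
-/

open Polynomial

/-- The shifted Chebyshev polynomials `T*ₙ`, defined by the integer recursion
`T*₀ = 3`, `T*₁ = X`, `T*₂ = X² - 2X`, `T*ₙ = X·T*ₙ₋₁ - X·T*ₙ₋₂ + T*ₙ₋₃`. -/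
noncomputable def Tstar : ℕ → Polynomial ℚ
  | 0 => 3
  | 1 => X
  | 2 => X ^ 2 - 2 * X
  | (n + 3) => X * Tstar (n + 2) - X * Tstar (n + 1) + Tstar n

namespace Polynomial.Chebyshev

variable {R : Type*} [CommRing R]

theorem two_mul_T_comp (n : ℤ) (p : R[X]) : 2 * (T R n).comp p = (C R n).comp (2 * p) := by
  have h2p : 2 * p = (2 * X : R[X]).comp p := by simp [mul_comp]
  rw [h2p, ← comp_assoc, C_comp_two_mul_X, mul_comp, ofNat_comp]
  norm_num

theorem C_natCast_comp_add_two (n : ℕ) (p : R[X]) :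
    (C R ↑(n + 2)).comp p = p * (C R ↑(n + 1)).comp p - (C R n).comp p := by
  push_cast
  rw [C_add_two, sub_comp, mul_comp, X_comp]

end Polynomial.Chebyshev

section Recurrence

variable {R : Type*} [CommRing R]

def tstarRecurrence (x : R) : LinearRecurrence R := ⟨3, ![1, -x, x]⟩

theorem isSolution_tstarRecurrence_iff (x : R) (u : ℕ → R) :
    (tstarRecurrence x).IsSolution u ↔ ∀ n, u (n + 3) = x * u (n + 2) - x * u (n + 1) + u n := by
  refine forall_congr' fun n ↦ ?_
  change u (n + 3) = ∑ i : Fin 3, ![1, -x, x] i * u (n + i) ↔ _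
  rw [Fin.sum_univ_three]
  congr! 1
  simp
  ring

theorem isSolution_tstarRecurrence_const_add {x : R} {v : ℕ → R}
    (hv : ∀ n, v (n + 2) = (x - 1) * v (n + 1) - v n) (c : R) :
    (tstarRecurrence x).IsSolution (fun n ↦ c + v n) := by
  rw [isSolution_tstarRecurrence_iff]
  intro n
  linear_combination hv (n + 1) - hv n

end Recurrence

theorem isSolution_Tstar : (tstarRecurrence X).IsSolution Tstar :=
  (isSolution_tstarRecurrence_iff _ _).2 fun n ↦ by rw [Tstar]

/-- `T*ₙ(x) = 1 + 2·Tₙ((x-1)/2)` where `Tₙ` is the Chebyshev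
polynomial of the first kind. -/
theorem stmt_3 (n : ℕ) :
    Tstar n = 1 + 2 * (Polynomial.Chebyshev.T ℚ n).comp (Polynomial.C (1/2 : ℚ) * (X - 1)) := by
  have two_mul_half : 2 * (Polynomial.C (1/2 : ℚ) * (X - 1)) = X - 1 := by
    rw [← mul_assoc, ← C_ofNat, ← C_mul]
    norm_num
  rw [Chebyshev.two_mul_T_comp, two_mul_half]
  suffices Tstar = fun n : ℕ ↦ 1 + (Chebyshev.C ℚ n).comp (X - 1) from congrFun this n
  refine ((tstarRecurrence X).eq_iff_eqOn_range_order _ _ isSolution_Tstar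
    (isSolution_tstarRecurrence_const_add
      (fun n ↦ Chebyshev.C_natCast_comp_add_two n (X - 1)) 1)).2 fun m hm ↦ ?_
  have : m < 3 := Finset.mem_range.1 hm
  interval_cases m <;> simp [Tstar, Chebyshev.C_two] <;> ring
end

section
/- Let u > 1 be real with u + u⁻¹ ∈ ℤ and d_r = 1 + u^r + u^{-r}. If n ≡ 0 (mod 3) then d_r divides d_{nr} - 3; if n ≡ 1 or 2 (mod 3), then d_r divides d_{nr}. -/
/-! Put `a = uʳ`, so `a⁻¹ = u⁻ʳ`, and `sₘ = aᵐ + a⁻ᵐ = d_{mr} - 1`. These integers satisfy the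
Lucas recurrence `sₘ₊₂ = t sₘ₊₁ - sₘ` with `t = s₁ = d_r - 1`, and any such sequence satisfies
`sₘ₊₃ - sₘ = (t + 1)((t - 1) sₘ₊₁ - sₘ)`. Hence modulo `t + 1 = d_r` the sequence `sₘ` is
`3`-periodic with values `s₀ = 2`, `s₁ = t ≡ -1`, `s₂ = t² - 2 ≡ -1`, i.e. `d_{nr} ≡ 3, 0, 0`. -/

section LucasRecurrence

variable {R : Type*} [CommRing R]

theorem pow_add_pow_add_two_of_mul_eq_one {a b : R} (hab : a * b = 1) (m : ℕ) :
    a ^ (m + 2) + b ^ (m + 2) = (a + b) * (a ^ (m + 1) + b ^ (m + 1)) - (a ^ m + b ^ m) := by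
  linear_combination -(a ^ m + b ^ m) * hab

variable {s : ℕ → R} {t : R}

theorem add_one_dvd_sub_of_recurrence (h : ∀ m, s (m + 2) = t * s (m + 1) - s m) (m : ℕ) :
    t + 1 ∣ s (m + 3) - s m :=
  ⟨(t - 1) * s (m + 1) - s m, by rw [h (m + 1), h m]; ring⟩

theorem add_one_dvd_sub_add_three_mul_of_recurrence
    (h : ∀ m, s (m + 2) = t * s (m + 1) - s m) (m k : ℕ) : t + 1 ∣ s (m + 3 * k) - s m := by
  induction k with
  | zero => simp
  | succ k ih =>
    rw [Nat.mul_succ, ← add_assoc, ← sub_add_sub_cancel _ (s (m + 3 * k))]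
    exact (add_one_dvd_sub_of_recurrence h _).add ih

theorem add_one_dvd_sub_mod_three_of_recurrence (h : ∀ m, s (m + 2) = t * s (m + 1) - s m)
    (n : ℕ) : t + 1 ∣ s n - s (n % 3) := by
  simpa only [Nat.mod_add_div] using add_one_dvd_sub_add_three_mul_of_recurrence h (n % 3) (n / 3)

theorem add_one_dvd_of_recurrence (h : ∀ m, s (m + 2) = t * s (m + 1) - s m) (h0 : s 0 = 2)
    (h1 : s 1 = t) (n : ℕ) :
    (n % 3 = 0 → t + 1 ∣ s n + 1 - 3) ∧ (n % 3 = 1 ∨ n % 3 = 2 → t + 1 ∣ s n + 1) := by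
  have hper := add_one_dvd_sub_mod_three_of_recurrence h n
  refine ⟨fun hn => ?_, fun hn => ?_⟩
  · rw [hn, h0] at hper
    rwa [show s n + 1 - 3 = s n - 2 by ring]
  rcases hn with hn | hn
  · rw [hn, h1] at hper
    rw [show s n + 1 = s n - t + (t + 1) by ring]
    exact hper.add (dvd_refl _)
  · have h2 : s 2 = t ^ 2 - 2 := by rw [h 0, h1, h0]; ring
    rw [hn, h2] at hper
    rw [show s n + 1 = s n - (t ^ 2 - 2) + (t - 1) * (t + 1) by ring]
    exact hper.add (dvd_mul_left _ _)

end LucasRecurrence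

theorem stmt_7_general (u : ℝ) (hu : 1 < u)
    (D : ℕ → ℤ) (hD : ∀ r : ℕ, (D r : ℝ) = 1 + u ^ r + u⁻¹ ^ r)
    (r n : ℕ) :
    (n % 3 = 0 → D r ∣ D (n * r) - 3) ∧
      (n % 3 = 1 ∨ n % 3 = 2 → D r ∣ D (n * r)) := by
  set s : ℕ → ℤ := fun m => D (m * r) - 1 with hs_def
  have hs : ∀ m, (s m : ℝ) = (u ^ r) ^ m + (u⁻¹ ^ r) ^ m := fun m => by
    simp only [hs_def, Int.cast_sub, Int.cast_one, hD, ← pow_mul, mul_comm r m]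
    ring
  have hrec : ∀ m, s (m + 2) = s 1 * s (m + 1) - s m := fun m => by
    have hab : u ^ r * u⁻¹ ^ r = 1 := by rw [← mul_pow, mul_inv_cancel₀ (by positivity), one_pow]
    exact_mod_cast (by simpa [hs] using pow_add_pow_add_two_of_mul_eq_one hab m :
      ((s (m + 2) : ℤ) : ℝ) = s 1 * s (m + 1) - s m)
  have hs0 : s 0 = 2 := by exact_mod_cast (by rw [hs]; norm_num : (s 0 : ℝ) = 2)
  simpa only [hs_def, one_mul, sub_add_cancel] using add_one_dvd_of_recurrence hrec hs0 rfl n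

/-- With `u > 1` real, `u + u⁻¹ ∈ ℤ`, and `d_r = 1 + uʳ + u⁻ʳ`
(integers `D r`): if `n ≡ 0 (mod 3)` then `d_r ∣ d_{nr} - 3`; if `n ≡ 1` or
`n ≡ 2 (mod 3)` then `d_r ∣ d_{nr}`. -/
theorem stmt_7 (u : ℝ) (hu : 1 < u)
    (D : ℕ → ℤ) (hD : ∀ r : ℕ, (D r : ℝ) = 1 + u ^ r + u⁻¹ ^ r)
    (r n : ℕ) (hr : 1 ≤ r) (hn : 1 ≤ n) :
    (n % 3 = 0 → D r ∣ D (n * r) - 3) ∧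
      (n % 3 = 1 ∨ n % 3 = 2 → D r ∣ D (n * r)) :=
  stmt_7_general u hu D hD r n
end

section
/- Let u > 1 be real with u + u⁻¹ ∈ ℤ and d_r = 1 + u^r + u^{-r}. Let (i_j)_{j≥1} be a strictly increasing sequence of positive integers each coprime to 3 with i_1 | i_2 | i_3 | ⋯. Then d_{i_1} | d_{i_2} | d_{i_3} | ⋯, i.e., the sequence (d_{i_j}) forms a divisibility tower. -/
/-!
Write `e_r = u^r + u^{-r} = d_r - 1`. The Dickson polynomial `P_n = dickson 1 1 n` has integer
coefficients and satisfies `P_n(x + x⁻¹) = x^n + x^{-n}`, so `e_{rn} = P_n(e_r)`. Since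
`e_r ≡ -1 [mod d_r]`, we get `e_{rn} ≡ P_n(-1) [mod d_r]`, and `P_n(-1) = ω^n + ω^{-n}` for a
primitive cube root of unity `ω`, which is `-1` when `3 ∤ n`. Hence `d_r ∣ d_{rn}`.
-/

open Polynomial

theorem dickson_one_one_eval_neg_one_add_three {R : Type*} [CommRing R] (n : ℕ) :
    (dickson 1 (1 : R) (n + 3)).eval (-1) = (dickson 1 (1 : R) n).eval (-1) := by
  simp only [dickson_add_two, eval_sub, eval_mul, eval_X, eval_C]
  ring

theorem dickson_one_one_eval_neg_one_mod_three {R : Type*} [CommRing R] (n : ℕ) :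
    (dickson 1 (1 : R) n).eval (-1) = (dickson 1 (1 : R) (n % 3)).eval (-1) := by
  induction n using Nat.strong_induction_on with
  | _ n ih =>
    rcases Nat.lt_or_ge n 3 with hn | hn
    · rw [Nat.mod_eq_of_lt hn]
    · obtain ⟨m, rfl⟩ := Nat.exists_eq_add_of_le' hn
      rw [dickson_one_one_eval_neg_one_add_three, Nat.add_mod_right]
      exact ih m (by omega)

theorem dickson_one_one_eval_neg_one_of_not_three_dvd {R : Type*} [CommRing R] {n : ℕ}
    (hn : ¬ 3 ∣ n) : (dickson 1 (1 : R) n).eval (-1) = -1 := by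
  rw [dickson_one_one_eval_neg_one_mod_three]
  have h : n % 3 = 1 ∨ n % 3 = 2 := by omega
  rcases h with h | h
  · simp [h]
  · simp [h]; norm_num

theorem add_one_dvd_dickson_one_one_eval_add_one {R : Type*} [CommRing R] (t : R) {n : ℕ}
    (hn : ¬ 3 ∣ n) : t + 1 ∣ (dickson 1 (1 : R) n).eval t + 1 := by
  simpa [dickson_one_one_eval_neg_one_of_not_three_dvd hn] using
    sub_dvd_eval_sub t (-1) (dickson 1 (1 : R) n)

section IntegerTraces

variable {R : Type*} [CommRing R] [CharZero R] {x y : R} {D : ℕ → ℤ}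

theorem apply_mul_sub_one_eq_dickson_eval (hxy : x * y = 1)
    (hD : ∀ r : ℕ, (D r : R) = 1 + x ^ r + y ^ r) (r n : ℕ) :
    D (r * n) - 1 = (dickson 1 (1 : ℤ) n).eval (D r - 1) := by
  apply Int.cast_injective (α := R)
  have hxy_r : x ^ r * y ^ r = 1 := by rw [← mul_pow, hxy, one_pow]
  have h := dickson_one_one_eval_add_inv _ _ hxy_r n
  have hcast : (((dickson 1 (1 : ℤ) n).eval (D r - 1) : ℤ) : R) =
      (dickson 1 (1 : R) n).eval ((D r : R) - 1) := by
    simpa [map_dickson] using (eval_intCast_map (Int.castRingHom R) (dickson 1 1 n) (D r - 1)).symm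
  rw [hcast, Int.cast_sub, Int.cast_one, hD, hD, add_assoc, add_assoc, add_sub_cancel_left,
    add_sub_cancel_left, h, pow_mul, pow_mul]

theorem dvd_mul_of_not_three_dvd (hxy : x * y = 1)
    (hD : ∀ r : ℕ, (D r : R) = 1 + x ^ r + y ^ r) (r : ℕ) {n : ℕ} (hn : ¬ 3 ∣ n) :
    D r ∣ D (r * n) := by
  have h := add_one_dvd_dickson_one_one_eval_add_one (D r - 1) hn
  rwa [← apply_mul_sub_one_eq_dickson_eval hxy hD, sub_add_cancel, sub_add_cancel] at h

end IntegerTraces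

theorem stmt_8_general (u : ℝ) (hu : 1 < u)
    (D : ℕ → ℤ) (hD : ∀ r : ℕ, (D r : ℝ) = 1 + u ^ r + u⁻¹ ^ r)
    (i : ℕ → ℕ)
    (hcop : ∀ j, Nat.Coprime (i j) 3) (hdvd : ∀ j, i j ∣ i (j + 1)) :
    ∀ j, D (i j) ∣ D (i (j + 1)) := by
  intro j
  obtain ⟨n, hn⟩ := hdvd j
  have hn3 : ¬ 3 ∣ n :=
    (Nat.Prime.coprime_iff_not_dvd Nat.prime_three).mp
      ((hcop (j + 1)).coprime_dvd_left (Dvd.intro_left _ hn.symm)).symm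
  rw [hn]
  exact dvd_mul_of_not_three_dvd (mul_inv_cancel₀ (by positivity)) hD _ hn3

/-- With `u > 1` real, `u + u⁻¹ ∈ ℤ` and `d_r = 1 + uʳ + u⁻ʳ`
(integers `D r`): if `(i_j)` is a strictly increasing sequence of positive
integers, each coprime to 3, with `i_j ∣ i_{j+1}`, then `D (i_j) ∣ D (i_{j+1})`
for every `j`, i.e. the `D (i_j)` form a divisibility tower. -/
theorem stmt_8 (u : ℝ) (hu : 1 < u)
    (D : ℕ → ℤ) (hD : ∀ r : ℕ, (D r : ℝ) = 1 + u ^ r + u⁻¹ ^ r)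
    (i : ℕ → ℕ) (hpos : ∀ j, 1 ≤ i j) (hmono : StrictMono i)
    (hcop : ∀ j, Nat.Coprime (i j) 3) (hdvd : ∀ j, i j ∣ i (j + 1)) :
    ∀ j, D (i j) ∣ D (i (j + 1)) :=
  stmt_8_general u hu D hD i hcop hdvd
end

section
/- Let K be a real quadratic field with ring of integers ℤ_K, u ∈ ℤ_K^× a totally positive unit of norm 1 with u > 1 under one embedding, and d_r = 1 + u^r + u^{-r}. If d_r is even, then u^{6r} ≡ 1 (mod 2·d_r·ℤ_K). -/
/-! Put `a = uʳ`, `b = u⁻ʳ`, so `ab = 1` and `d_r = 1 + a + b`. Then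
`u^{6r} - 1 = d_r (d_r - 2) · a³ (a - b)`, and when `d_r` is even, `2 d_r ∣ d_r (d_r - 2)`. -/

open NumberField

theorem pow_six_sub_one_eq_of_mul_eq_one {R : Type*} [CommRing R] {a b : R} (hab : a * b = 1) :
    a ^ 6 - 1 = (1 + a + b) * (1 + a + b - 2) * (a ^ 3 * (a - b)) := by
  linear_combination (a ^ 2 * b ^ 2 + a * b + 1 + a ^ 3 * b - a ^ 4) * hab

theorem Int.two_mul_dvd_mul_sub_two_of_even {d : ℤ} (hd : Even d) : 2 * d ∣ d * (d - 2) := by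
  obtain ⟨k, rfl⟩ := hd
  exact ⟨k - 1, by ring⟩

theorem two_mul_dvd_pow_six_sub_one_of_mul_eq_one {R : Type*} [CommRing R] {a b : R}
    (hab : a * b = 1) {d : ℤ} (hd : (d : R) = 1 + a + b) (heven : Even d) :
    ((2 * d : ℤ) : R) ∣ a ^ 6 - 1 := by
  rw [pow_six_sub_one_eq_of_mul_eq_one hab, ← hd]
  refine dvd_mul_of_dvd_left ?_ _
  exact_mod_cast Int.cast_dvd_cast _ _ (Int.two_mul_dvd_mul_sub_two_of_even heven)

theorem stmt_11_general (K : Type*) [Field K] (u : (𝓞 K)ˣ) (r : ℕ) (dr : ℤ)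
    (hdr : (dr : 𝓞 K) = 1 + (u : 𝓞 K) ^ r + ((u⁻¹ : (𝓞 K)ˣ) : 𝓞 K) ^ r)
    (heven : Even dr) :
    ((2 * dr : ℤ) : 𝓞 K) ∣ (u : 𝓞 K) ^ (6 * r) - 1 := by
  have hab : (u : 𝓞 K) ^ r * ((u⁻¹ : (𝓞 K)ˣ) : 𝓞 K) ^ r = 1 := by
    rw [← mul_pow, Units.mul_inv, one_pow]
  rw [mul_comm 6 r, pow_mul]
  exact two_mul_dvd_pow_six_sub_one_of_mul_eq_one hab hdr heven

/-- Let `K` be a real quadratic field, `u ∈ ℤ_K^×` a totally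
positive unit of norm 1 with `u > 1` under one embedding, and `d_r ∈ ℤ` with
`d_r = 1 + uʳ + u⁻ʳ` in `ℤ_K`. If `d_r` is even then `u^{6r} ≡ 1 (mod 2·d_r·ℤ_K)`. -/
theorem stmt_11 (K : Type*) [Field K] [NumberField K]
    (hdeg : Module.finrank ℚ K = 2) (v : K →+* ℝ)
    (u : (𝓞 K)ˣ) (hu : 1 < v ((u : 𝓞 K) : K))
    (hpos : ∀ w : K →+* ℝ, 0 < w ((u : 𝓞 K) : K))
    (hnorm : Algebra.norm ℚ (((u : 𝓞 K) : K)) = 1)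
    (r : ℕ) (hr : 1 ≤ r) (dr : ℤ)
    (hdr : (dr : 𝓞 K) = 1 + (u : 𝓞 K) ^ r + ((u⁻¹ : (𝓞 K)ˣ) : 𝓞 K) ^ r)
    (heven : Even dr) :
    ((2 * dr : ℤ) : 𝓞 K) ∣ (u : 𝓞 K) ^ (6 * r) - 1 :=
  stmt_11_general K u r dr hdr heven
end

section
/- Let K be a real quadratic field, u ∈ ℤ_K^× a unit of norm 1 with u > 1, and d_r = 1 + u^r + u^{-r} for r ≥ 1. Then the multiplicative order of u modulo d_r·ℤ_K is exactly 3r. -/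
/-!
Write `ū = u⁻¹`. The identity `u³ʳ - 1 = uʳ (uʳ - 1) d_r` gives `d_r ∣ u³ʳ - 1`, so the order
divides `3r`, and it suffices to show that every `g ≥ 1` with `d_r ∣ uᵍ - 1` exceeds `2r`.
Such a `g` also has `d_r ∣ ūᵍ - 1`, hence `d_r²` divides `(uᵍ - 1)(ūᵍ - 1) = 3 - d_g`, an integer,
so `d_r² ∣ d_g - 3` in `ℤ`. Under the real embedding `d_g - 3 > 0`, while for `g ≤ 2r` one has
`d_g - 3 < u²ʳ < d_r²`, which is impossible.
-/

open NumberField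

section UnitIdentities

variable {R : Type*} [CommRing R] {a b : R}

theorem one_add_add_dvd_pow_three_sub_one (h : a * b = 1) : 1 + a + b ∣ a ^ 3 - 1 :=
  ⟨a * (a - 1), by linear_combination (1 - a) * h⟩

theorem sq_dvd_three_sub_one_add_add_of_dvd_sub_one (h : a * b = 1) {c : R} (hc : c ∣ a - 1) :
    c ^ 2 ∣ 3 - (1 + a + b) := by
  have hcb : c ∣ b - 1 := by
    rw [show b - 1 = -b * (a - 1) by linear_combination h]
    exact hc.mul_left _
  rw [show 3 - (1 + a + b) = (a - 1) * (b - 1) by linear_combination -h, sq]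
  exact mul_dvd_mul hc hcb

end UnitIdentities

section RealEstimates

variable {α : ℝ}

theorem three_lt_one_add_pow_add_inv_pow (hα : 1 < α) {g : ℕ} (hg : g ≠ 0) :
    3 < 1 + α ^ g + α⁻¹ ^ g := by
  have ht : 1 < α ^ g := one_lt_pow₀ hα hg
  have hprod : α ^ g * α⁻¹ ^ g = 1 := by
    rw [← mul_pow, mul_inv_cancel₀ (by positivity), one_pow]
  nlinarith [inv_pow α g, pow_pos (inv_pos.2 (zero_lt_one.trans hα)) g]

theorem one_add_pow_add_inv_pow_sub_three_lt_sq (hα : 1 ≤ α) {g r : ℕ} (hg : g ≤ 2 * r) :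
    1 + α ^ g + α⁻¹ ^ g - 3 < (1 + α ^ r + α⁻¹ ^ r) ^ 2 := by
  have hαg : α ^ g ≤ (α ^ r) ^ 2 := by
    rw [← pow_mul, mul_comm]
    exact pow_le_pow_right₀ hα hg
  have hinv : α⁻¹ ^ g ≤ 1 := pow_le_one₀ (by positivity) (inv_le_one_of_one_le₀ hα)
  have hαr : 1 ≤ α ^ r := one_le_pow₀ hα
  have hinvr : 0 ≤ α⁻¹ ^ r := by positivity
  nlinarith

end RealEstimates

namespace NumberField.RingOfIntegers

variable {K : Type*} [Field K] [NumberField K]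

theorem intCast_dvd_intCast_iff {m n : ℤ} : (m : 𝓞 K) ∣ n ↔ m ∣ n := by
  refine ⟨fun h => ?_, Int.cast_dvd_cast _ _⟩
  have hrank : Module.finrank ℤ (𝓞 K) ≠ 0 := Module.finrank_pos.ne'
  have := map_dvd (Algebra.norm ℤ) h
  rwa [← eq_intCast (algebraMap ℤ (𝓞 K)), ← eq_intCast (algebraMap ℤ (𝓞 K)),
    Algebra.norm_algebraMap, Algebra.norm_algebraMap, Int.pow_dvd_pow_iff hrank] at this

theorem two_mul_lt_of_dvd_pow_sub_one (v : K →+* ℝ) (u : (𝓞 K)ˣ) (hu : 1 < v ((u : 𝓞 K) : K))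
    {r g : ℕ} (hg : g ≠ 0) {m n : ℤ}
    (hm : (m : 𝓞 K) = 1 + (u : 𝓞 K) ^ r + ((u⁻¹ : (𝓞 K)ˣ) : 𝓞 K) ^ r)
    (hn : (n : 𝓞 K) = 1 + (u : 𝓞 K) ^ g + ((u⁻¹ : (𝓞 K)ˣ) : 𝓞 K) ^ g)
    (hdvd : (m : 𝓞 K) ∣ (u : 𝓞 K) ^ g - 1) : 2 * r < g := by
  have hv : ∀ (s : ℕ) (k : ℤ), (k : 𝓞 K) = 1 + (u : 𝓞 K) ^ s + ((u⁻¹ : (𝓞 K)ˣ) : 𝓞 K) ^ s →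
      (k : ℝ) = 1 + v ((u : 𝓞 K) : K) ^ s + (v ((u : 𝓞 K) : K))⁻¹ ^ s := by
    intro s k hk
    simpa only [map_intCast, map_add, map_one, map_pow, map_units_inv, RingHom.comp_apply]
      using congrArg (v.comp (algebraMap (𝓞 K) K)) hk
  have hsq : m ^ 2 ∣ n - 3 := by
    rw [← intCast_dvd_intCast_iff (K := K), ← dvd_neg]
    push_cast
    rw [neg_sub, hn]
    exact sq_dvd_three_sub_one_add_add_of_dvd_sub_one
      (by rw [← mul_pow, u.mul_inv, one_pow]) hdvd
  have hn3 : (3 : ℝ) < n := hv g n hn ▸ three_lt_one_add_pow_add_inv_pow hu hg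
  have hle : m ^ 2 ≤ n - 3 := Int.le_of_dvd (by exact_mod_cast sub_pos.2 hn3) hsq
  by_contra! hgr
  have hlt := one_add_pow_add_inv_pow_sub_three_lt_sq hu.le hgr
  rw [← hv g n hn, ← hv r m hm] at hlt
  have hle' : (m : ℝ) ^ 2 ≤ n - 3 := by exact_mod_cast hle
  linarith

end NumberField.RingOfIntegers

theorem orderOf_eq_of_pow_eq_one_of_forall_lt_two_mul {M : Type*} [Monoid M] {x : M} {n : ℕ}
    (hn : n ≠ 0) (hx : x ^ n = 1) (h : ∀ m, m ≠ 0 → x ^ m = 1 → n < 2 * m) : orderOf x = n := by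
  have hpos : orderOf x ≠ 0 :=
    (isOfFinOrder_iff_pow_eq_one.2 ⟨n, Nat.pos_of_ne_zero hn, hx⟩).orderOf_pos.ne'
  exact (Nat.eq_of_dvd_of_lt_two_mul hn (orderOf_dvd_of_pow_eq_one hx)
    (h _ hpos (pow_orderOf_eq_one x))).symm

theorem stmt_12_general (K : Type*) [Field K] [NumberField K]
    (v : K →+* ℝ)
    (u : (𝓞 K)ˣ) (hu : 1 < v ((u : 𝓞 K) : K))
    (d : ℕ → ℤ)
    (hd : ∀ s : ℕ, 1 ≤ s →
      ((d s : ℤ) : 𝓞 K) = 1 + (u : 𝓞 K) ^ s + ((u⁻¹ : (𝓞 K)ˣ) : 𝓞 K) ^ s)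
    (r : ℕ) (hr : 1 ≤ r) :
    ((d r : ℤ) : 𝓞 K) ∣ (u : 𝓞 K) ^ (3 * r) - 1 ∧
      ∀ q : ℕ, 1 ≤ q → ((d r : ℤ) : 𝓞 K) ∣ (u : 𝓞 K) ^ q - 1 → 3 * r ≤ q := by
  set x := Ideal.Quotient.mk (Ideal.span {((d r : ℤ) : 𝓞 K)}) (u : 𝓞 K)
  have hdvd_iff (m : ℕ) : ((d r : ℤ) : 𝓞 K) ∣ (u : 𝓞 K) ^ m - 1 ↔ x ^ m = 1 := by
    rw [← Ideal.Quotient.eq_zero_iff_dvd, map_sub, map_pow, map_one, sub_eq_zero]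
  have hcube : ((d r : ℤ) : 𝓞 K) ∣ (u : 𝓞 K) ^ (3 * r) - 1 := by
    rw [hd r hr, mul_comm, pow_mul]
    exact one_add_add_dvd_pow_three_sub_one (by rw [← mul_pow, u.mul_inv, one_pow])
  have hord : orderOf x = 3 * r := by
    refine orderOf_eq_of_pow_eq_one_of_forall_lt_two_mul (by omega) ((hdvd_iff _).1 hcube)
      fun g hg hxg => ?_
    have := RingOfIntegers.two_mul_lt_of_dvd_pow_sub_one v u hu hg (hd r hr)
      (hd g (Nat.one_le_iff_ne_zero.2 hg)) ((hdvd_iff g).2 hxg)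
    omega
  exact ⟨hcube, fun q hq hdq => hord ▸ orderOf_le_of_pow_eq_one hq ((hdvd_iff q).1 hdq)⟩

/-- Let `K` be a real quadratic field and `u ∈ ℤ_K^×` the smallest
totally positive unit `> 1` (of norm 1) under the embedding `v`, and
`d_s = 1 + uˢ + u⁻ˢ ∈ ℤ` with `d_r > 3`. Then the multiplicative order of `u`
modulo `d_r ℤ_K` is exactly `3r`. -/
theorem stmt_12 (K : Type*) [Field K] [NumberField K]
    (hdeg : Module.finrank ℚ K = 2) (v : K →+* ℝ)
    (u : (𝓞 K)ˣ) (hu : 1 < v ((u : 𝓞 K) : K))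
    (hpos : ∀ w : K →+* ℝ, 0 < w ((u : 𝓞 K) : K))
    (hnorm : Algebra.norm ℚ (((u : 𝓞 K) : K)) = 1)
    (hmin : ∀ w : (𝓞 K)ˣ, 1 < v ((w : 𝓞 K) : K) →
      (∀ emb : K →+* ℝ, 0 < emb ((w : 𝓞 K) : K)) →
      v ((u : 𝓞 K) : K) ≤ v ((w : 𝓞 K) : K))
    (d : ℕ → ℤ)
    (hd : ∀ s : ℕ, 1 ≤ s →
      ((d s : ℤ) : 𝓞 K) = 1 + (u : 𝓞 K) ^ s + ((u⁻¹ : (𝓞 K)ˣ) : 𝓞 K) ^ s)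
    (r : ℕ) (hr : 1 ≤ r) (hdr3 : 3 < d r) :
    ((d r : ℤ) : 𝓞 K) ∣ (u : 𝓞 K) ^ (3 * r) - 1 ∧
      ∀ q : ℕ, 1 ≤ q → ((d r : ℤ) : 𝓞 K) ∣ (u : 𝓞 K) ^ q - 1 → 3 * r ≤ q :=
  stmt_12_general K v u hu d hd r hr
end

section
/- Let K be a real quadratic field, u ∈ ℤ_K^× of norm 1 with u > 1, and d_r = 1 + u^r + u^{-r}. If d_r is even, then the multiplicative order of u modulo 2d_r·ℤ_K is exactly 6r. -/
/-!
Put `x = u ^ r`, so that `x + x⁻¹ = D - 1` with `D = d_r`, and work modulo `2D`. When `D` is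
even, both `2D` and `D²` vanish there, and the relation `x³ = D(D - 2)x + 1 - D` becomes
`u ^ (3r) ≡ 1 - D`, an element of order exactly `2`. Hence the order of `u` is `2m` with
`3r = m k`, `k` odd. If `k ≥ 3`, then `m ≤ r`, `u ^ m ≡ 1 - D`, `u ^ (-m) ≡ 1 + D`, and so
`d_m ≡ 3 mod 2D`; this is impossible because `3 < d_m ≤ d_r` in the real embedding.
-/

open NumberField

theorem Int.dvd_of_intCast_dvd_intCast {S : Type*} [CommRing S] [Nontrivial S]
    [Module.Free ℤ S] [Module.Finite ℤ S] {a b : ℤ} (h : (a : S) ∣ (b : S)) : a ∣ b := by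
  have hnorm := map_dvd (Algebra.norm ℤ (S := S)) h
  rw [← eq_intCast (algebraMap ℤ S) a, ← eq_intCast (algebraMap ℤ S) b,
    Algebra.norm_algebraMap, Algebra.norm_algebraMap] at hnorm
  exact (Int.pow_dvd_pow_iff Module.finrank_pos.ne').mp hnorm

theorem two_lt_add_inv_self {α : Type*} [Field α] [LinearOrder α] [IsStrictOrderedRing α]
    {a : α} (ha : 1 < a) : 2 < a + a⁻¹ := by
  have ha0 : 0 < a := by linarith
  have key : a + a⁻¹ - 2 = (a - 1) ^ 2 / a := by field_simp; ring
  have : 0 < (a - 1) ^ 2 / a := div_pos (pow_pos (by linarith) 2) ha0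
  linarith

theorem add_inv_self_le_add_inv_self {α : Type*} [Field α] [LinearOrder α]
    [IsStrictOrderedRing α] {a b : α} (ha : 1 ≤ a) (hab : a ≤ b) : a + a⁻¹ ≤ b + b⁻¹ := by
  have ha0 : 0 < a := by linarith
  have hb0 : 0 < b := by linarith
  have key : b + b⁻¹ - (a + a⁻¹) = (b - a) * (a * b - 1) / (a * b) := by field_simp; ring
  have : 0 ≤ (b - a) * (a * b - 1) / (a * b) :=
    div_nonneg (mul_nonneg (by linarith) (by nlinarith)) (by positivity)
  linarith

theorem exists_orderOf_eq_two_mul_of_pow_ne_one {M : Type*} [Monoid M] {x : M} {N : ℕ}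
    (h2N : x ^ (2 * N) = 1) (hN : x ^ N ≠ 1) :
    ∃ m k : ℕ, Odd k ∧ m * k = N ∧ orderOf x = 2 * m ∧ x ^ N = x ^ m := by
  obtain ⟨k, hk⟩ := orderOf_dvd_of_pow_eq_one h2N
  have hndvd : ¬ orderOf x ∣ N := mt orderOf_dvd_iff_pow_eq_one.mp hN
  have hk_odd : Odd k := by
    rw [← Nat.not_even_iff_odd]
    rintro ⟨j, rfl⟩
    exact hndvd ⟨j, by linarith⟩
  obtain ⟨m, hm⟩ : Even (orderOf x) :=
    (Nat.even_mul.mp ⟨N, by omega⟩).resolve_right (Nat.not_even_iff_odd.mpr hk_odd)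
  obtain ⟨j, rfl⟩ := hk_odd
  have hmk : m * (2 * j + 1) = N := by rw [hm] at hk; linarith
  refine ⟨m, 2 * j + 1, odd_two_mul_add_one j, hmk, by omega, ?_⟩
  rw [← hmk, mul_add, mul_one, pow_add, ← mul_assoc, mul_comm m 2, pow_mul, two_mul, ← hm,
    pow_orderOf_eq_one, one_pow, one_mul]

theorem not_two_mul_dvd_sub_three {d : ℕ → ℤ} {t : ℝ} (ht : 1 < t)
    (hd : ∀ s, 1 ≤ s → (d s : ℝ) = 1 + (t ^ s + (t ^ s)⁻¹)) {m r : ℕ} (hm : 1 ≤ m)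
    (hmr : m ≤ r) : ¬ 2 * d r ∣ d m - 3 := by
  have h3 : (3 : ℝ) < d m := by
    rw [hd m hm]; linarith [two_lt_add_inv_self (one_lt_pow₀ ht (by omega : m ≠ 0))]
  have hle : (d m : ℝ) ≤ d r := by
    rw [hd m hm, hd r (hm.trans hmr)]
    linarith [add_inv_self_le_add_inv_self (one_le_pow₀ ht.le) (pow_le_pow_right₀ ht.le hmr)]
  have h3 : 3 < d m := by exact_mod_cast h3
  have hle : d m ≤ d r := by exact_mod_cast hle
  intro hdvd
  have := Int.le_of_dvd (by omega) hdvd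
  omega

theorem intCast_mul_self_eq_zero_of_even {A : Type*} [CommRing A] {D : ℤ} (hD : Even D)
    (h2D : ((2 * D : ℤ) : A) = 0) : (D : A) * D = 0 := by
  obtain ⟨c, rfl⟩ := hD
  calc ((c + c : ℤ) : A) * (c + c : ℤ) = c * ((2 * (c + c) : ℤ) : A) := by push_cast; ring
    _ = 0 := by rw [h2D, mul_zero]

section SquareZero

variable {R : Type*} [CommRing R] {x y D : R}

theorem pow_three_eq_one_sub_of_mul_eq_one (hxy : x * y = 1) (hD : D = 1 + x + y)
    (h2D : 2 * D = 0) (hDD : D * D = 0) : x ^ 3 = 1 - D := by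
  linear_combination x * hDD - x * h2D + (1 - x * (D + 1 + x + y) + 2 * x) * hD -
    (y + 2 * x) * hxy

theorem one_add_add_eq_three_of_eq_one_sub (hxy : x * y = 1) (hx : x = 1 - D)
    (hDD : D * D = 0) : 1 + x + y = 3 := by
  linear_combination (1 + D) * hxy + (1 - y * (1 + D)) * hx + y * hDD

variable {r : ℕ} (hxy : x * y = 1) (hD : D = 1 + x ^ r + y ^ r) (h2D : 2 * D = 0)
  (hDD : D * D = 0)
include hxy hD h2D hDD

theorem pow_three_mul_eq_one_sub : x ^ (3 * r) = 1 - D := by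
  rw [pow_mul']
  exact pow_three_eq_one_sub_of_mul_eq_one (by rw [← mul_pow, hxy, one_pow]) hD h2D hDD

theorem pow_six_mul_eq_one : x ^ (6 * r) = 1 := by
  rw [show 6 * r = 2 * (3 * r) by ring, pow_mul', pow_three_mul_eq_one_sub hxy hD h2D hDD]
  linear_combination hDD - h2D

theorem orderOf_eq_six_mul_or_exists (hD0 : D ≠ 0) :
    orderOf x = 6 * r ∨ ∃ m, 1 ≤ m ∧ m ≤ r ∧ 1 + x ^ m + y ^ m = 3 := by
  have h3r := pow_three_mul_eq_one_sub hxy hD h2D hDD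
  have hne : x ^ (3 * r) ≠ 1 := by rw [h3r]; simpa using hD0
  have h6r : x ^ (2 * (3 * r)) = 1 := by
    rw [← mul_assoc]; exact pow_six_mul_eq_one hxy hD h2D hDD
  obtain ⟨m, _, ⟨j, rfl⟩, hmk, hord, hxm⟩ := exists_orderOf_eq_two_mul_of_pow_ne_one h6r hne
  rcases Nat.eq_zero_or_pos j with rfl | hj
  · left; omega
  · right
    have hm : 1 ≤ m := Nat.pos_of_ne_zero fun h => hne (by simp [← hmk, h])
    refine ⟨m, hm, by nlinarith, one_add_add_eq_three_of_eq_one_sub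
      (by rw [← mul_pow, hxy, one_pow]) (hxm ▸ h3r) hDD⟩

end SquareZero

theorem stmt_13_general (K : Type*) [Field K] [NumberField K]
    (v : K →+* ℝ)
    (u : (𝓞 K)ˣ) (hu : 1 < v ((u : 𝓞 K) : K))
    (d : ℕ → ℤ)
    (hd : ∀ s : ℕ, 1 ≤ s →
      ((d s : ℤ) : 𝓞 K) = 1 + (u : 𝓞 K) ^ s + ((u⁻¹ : (𝓞 K)ˣ) : 𝓞 K) ^ s)
    (r : ℕ) (hr : 1 ≤ r) (hdr3 : 3 < d r) (heven : Even (d r)) :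
    ((2 * d r : ℤ) : 𝓞 K) ∣ (u : 𝓞 K) ^ (6 * r) - 1 ∧
      ∀ q : ℕ, 1 ≤ q → ((2 * d r : ℤ) : 𝓞 K) ∣ (u : 𝓞 K) ^ q - 1 → 6 * r ≤ q := by
  set T : 𝓞 K := ((2 * d r : ℤ) : 𝓞 K)
  let π := Ideal.Quotient.mk (Ideal.span {T})
  have hπ_eq (a b : 𝓞 K) : π a = π b ↔ T ∣ a - b :=
    (Ideal.Quotient.mk_eq_mk_iff_sub_mem a b).trans Ideal.mem_span_singleton
  have hπ_int (z : ℤ) (hz : (z : 𝓞 K ⧸ Ideal.span {T}) = 0) : 2 * d r ∣ z :=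
    Int.dvd_of_intCast_dvd_intCast <| Ideal.mem_span_singleton.mp <|
      Ideal.Quotient.eq_zero_iff_mem.mp (by rwa [map_intCast π])
  have hT : ((2 * d r : ℤ) : 𝓞 K ⧸ Ideal.span {T}) = 0 := by
    rw [← map_intCast π]
    exact Ideal.Quotient.eq_zero_iff_mem.mpr (Ideal.mem_span_singleton_self T)
  have hxy : π u * π ↑u⁻¹ = 1 := by rw [← map_mul, Units.mul_inv, map_one]
  have hD : (d r : 𝓞 K ⧸ Ideal.span {T}) = 1 + π u ^ r + π ↑u⁻¹ ^ r := by
    rw [← map_intCast π, hd r hr, map_add, map_add, map_one, map_pow, map_pow]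
  have h2D : 2 * (d r : 𝓞 K ⧸ Ideal.span {T}) = 0 := by exact_mod_cast hT
  have hDD := intCast_mul_self_eq_zero_of_even heven hT
  have hD0 : (d r : 𝓞 K ⧸ Ideal.span {T}) ≠ 0 := fun h => by
    have := Int.le_of_dvd (by omega) (hπ_int _ h)
    omega
  refine ⟨(hπ_eq _ _).mp (by rw [map_pow, map_one]; exact pow_six_mul_eq_one hxy hD h2D hDD),
    fun q hq hTq => ?_⟩
  have hxq : π u ^ q = 1 := by rw [← map_pow, ← map_one π]; exact (hπ_eq _ _).mpr hTq
  rcases orderOf_eq_six_mul_or_exists hxy hD h2D hDD hD0 with hord | ⟨m, hm, hmr, h3⟩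
  · exact hord ▸ orderOf_le_of_pow_eq_one (by omega) hxq
  let f : 𝓞 K →+* ℝ := v.comp (algebraMap (𝓞 K) K)
  refine absurd (hπ_int _ ?_) (not_two_mul_dvd_sub_three (t := f u) hu (fun s hs => ?_) hm hmr)
  · rw [Int.cast_sub, ← map_intCast π, hd m hm, map_add, map_add, map_one, map_pow, map_pow, h3,
      Int.cast_ofNat, sub_self]
  · rw [← map_intCast f, hd s hs, map_add, map_add, map_one, map_pow, map_pow, map_units_inv,
      inv_pow, add_assoc]

/-- Let `K` be a real quadratic field and `u ∈ ℤ_K^×` the smallest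
totally positive unit `> 1` (of norm 1) under the embedding `v`, and
`d_s = 1 + uˢ + u⁻ˢ ∈ ℤ` with `d_r > 3`. Then the multiplicative order of `u`
modulo `2·d_r·ℤ_K` is exactly `6r` (assuming `d_r` even). -/
theorem stmt_13 (K : Type*) [Field K] [NumberField K]
    (hdeg : Module.finrank ℚ K = 2) (v : K →+* ℝ)
    (u : (𝓞 K)ˣ) (hu : 1 < v ((u : 𝓞 K) : K))
    (hpos : ∀ w : K →+* ℝ, 0 < w ((u : 𝓞 K) : K))
    (hnorm : Algebra.norm ℚ (((u : 𝓞 K) : K)) = 1)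
    (hmin : ∀ w : (𝓞 K)ˣ, 1 < v ((w : 𝓞 K) : K) →
      (∀ emb : K →+* ℝ, 0 < emb ((w : 𝓞 K) : K)) →
      v ((u : 𝓞 K) : K) ≤ v ((w : 𝓞 K) : K))
    (d : ℕ → ℤ)
    (hd : ∀ s : ℕ, 1 ≤ s →
      ((d s : ℤ) : 𝓞 K) = 1 + (u : 𝓞 K) ^ s + ((u⁻¹ : (𝓞 K)ˣ) : 𝓞 K) ^ s)
    (r : ℕ) (hr : 1 ≤ r) (hdr3 : 3 < d r) (heven : Even (d r)) :
    ((2 * d r : ℤ) : 𝓞 K) ∣ (u : 𝓞 K) ^ (6 * r) - 1 ∧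
      ∀ q : ℕ, 1 ≤ q → ((2 * d r : ℤ) : 𝓞 K) ∣ (u : 𝓞 K) ^ q - 1 → 6 * r ≤ q :=
  stmt_13_general K v u hu d hd r hr hdr3 heven
end

section
/- Let K be a real quadratic field, u ∈ ℤ_K^× the smallest totally positive power of the fundamental unit (norm 1, u > 1), and d_r = 1 + u^r + u^{-r}. If q ≥ 1 satisfies u^q ≡ 1 (mod d_r ℤ_K), then d_r divides d_q - 3 and hence q > r. -/
/-!
In `𝓞 K` one has `d_q - 3 = u^q + u^{-q} - 2 = (1 - u^{-q}) (u^q - 1)`, a multiple of `d_r`;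
taking norms turns this into a divisibility in `ℤ`. Under `v` the sequence `d_s` becomes
`1 + t^s + t^{-s}` with `t > 1`, which is strictly increasing with value `3` at `s = 0`.
Hence `0 < d_q - 3`, so `d_r ≤ d_q - 3 < d_q`, and monotonicity gives `r < q`.
-/

open NumberField

theorem NumberField.RingOfIntegers.intCast_dvd_intCast {K : Type*} [Field K] [NumberField K]
    {a b : ℤ} : (a : 𝓞 K) ∣ b ↔ a ∣ b := by
  refine ⟨fun h => ?_, Int.cast_dvd_cast a b⟩
  have hnorm := map_dvd (Algebra.norm ℤ) h
  rw [← eq_intCast (algebraMap ℤ (𝓞 K)) a, ← eq_intCast (algebraMap ℤ (𝓞 K)) b,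
    Algebra.norm_algebraMap, Algebra.norm_algebraMap] at hnorm
  exact (IsIntegrallyClosed.pow_dvd_pow_iff Module.finrank_pos.ne').mp hnorm

theorem Units.sub_one_dvd_add_inv_sub_two {R : Type*} [CommRing R] (u : Rˣ) :
    (u : R) - 1 ∣ u + ↑u⁻¹ - 2 :=
  ⟨1 - ↑u⁻¹, by linear_combination u.mul_inv⟩

theorem strictMonoOn_add_inv {α : Type*} [Field α] [LinearOrder α] [IsStrictOrderedRing α] :
    StrictMonoOn (fun x : α => x + x⁻¹) (Set.Ici 1) := by
  intro a (ha : 1 ≤ a) b (hb : 1 ≤ b) hab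
  have hab1 : 1 < a * b := by nlinarith
  have key : b + b⁻¹ - (a + a⁻¹) = (b - a) * (a * b - 1) / (a * b) := by
    field_simp; ring
  exact sub_pos.mp (key ▸ div_pos (mul_pos (sub_pos.mpr hab) (sub_pos.mpr hab1)) (by linarith))

theorem strictMono_pow_add_inv_pow {α : Type*} [Field α] [LinearOrder α] [IsStrictOrderedRing α]
    {t : α} (ht : 1 < t) : StrictMono fun n : ℕ => t ^ n + t⁻¹ ^ n := by
  intro m n hmn
  simp only [inv_pow]
  exact strictMonoOn_add_inv (one_le_pow₀ ht.le : 1 ≤ t ^ m) (one_le_pow₀ ht.le : 1 ≤ t ^ n)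
    (pow_lt_pow_right₀ ht hmn)

theorem stmt_14_general (K : Type*) [Field K] [NumberField K]
    (v : K →+* ℝ)
    (u : (𝓞 K)ˣ) (hu : 1 < v ((u : 𝓞 K) : K))
    (d : ℕ → ℤ)
    (hd : ∀ s : ℕ, 1 ≤ s →
      ((d s : ℤ) : 𝓞 K) = 1 + (u : 𝓞 K) ^ s + ((u⁻¹ : (𝓞 K)ˣ) : 𝓞 K) ^ s)
    (r : ℕ) (hr : 1 ≤ r)
    (q : ℕ) (hq : 1 ≤ q) (hdvd : ((d r : ℤ) : 𝓞 K) ∣ (u : 𝓞 K) ^ q - 1) :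
    d r ∣ d q - 3 ∧ r < q := by
  have hdiv : d r ∣ d q - 3 := by
    refine RingOfIntegers.intCast_dvd_intCast.mp (hdvd.trans ?_)
    convert (u ^ q).sub_one_dvd_add_inv_sub_two using 1 <;> push_cast [hd q hq] <;> ring
  set t := v ((u : 𝓞 K) : K)
  have hreal : ∀ s, 1 ≤ s → (d s : ℝ) = 1 + (t ^ s + t⁻¹ ^ s) := by
    intro s hs
    have hv := congrArg (fun x : 𝓞 K => v x) (hd s hs)
    have hinv : v ((u⁻¹ : (𝓞 K)ˣ) : 𝓞 K) = t⁻¹ := map_units_inv (v.comp (algebraMap (𝓞 K) K)) u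
    simp only [map_intCast, map_add, map_one, map_pow] at hv
    rw [hv, hinv]
    ring
  have hmono := strictMono_pow_add_inv_pow hu
  have h3 : (3 : ℝ) < d q := by
    have := hmono (show 0 < q by omega)
    simp only [pow_zero] at this
    linarith [hreal q hq]
  have hlt : d r < d q := by
    have := Int.le_of_dvd (by exact_mod_cast (by linarith : (0 : ℝ) < d q - 3)) hdiv
    omega
  refine ⟨hdiv, hmono.lt_iff_lt.mp ?_⟩
  have : (d r : ℝ) < d q := by exact_mod_cast hlt
  linarith [hreal r hr, hreal q hq]

/-- Let `K` be a real quadratic field and `u ∈ ℤ_K^×` the smallest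
totally positive unit `> 1` (of norm 1) under the embedding `v`, and
`d_s = 1 + uˢ + u⁻ˢ ∈ ℤ` with `d_r > 3`. If `q ≥ 1` satisfies
`u^q ≡ 1 (mod d_r ℤ_K)`, then `d_r ∣ d_q - 3` and hence `q > r`. -/
theorem stmt_14 (K : Type*) [Field K] [NumberField K]
    (hdeg : Module.finrank ℚ K = 2) (v : K →+* ℝ)
    (u : (𝓞 K)ˣ) (hu : 1 < v ((u : 𝓞 K) : K))
    (hpos : ∀ w : K →+* ℝ, 0 < w ((u : 𝓞 K) : K))
    (hnorm : Algebra.norm ℚ (((u : 𝓞 K) : K)) = 1)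
    (hmin : ∀ w : (𝓞 K)ˣ, 1 < v ((w : 𝓞 K) : K) →
      (∀ emb : K →+* ℝ, 0 < emb ((w : 𝓞 K) : K)) →
      v ((u : 𝓞 K) : K) ≤ v ((w : 𝓞 K) : K))
    (d : ℕ → ℤ)
    (hd : ∀ s : ℕ, 1 ≤ s →
      ((d s : ℤ) : 𝓞 K) = 1 + (u : 𝓞 K) ^ s + ((u⁻¹ : (𝓞 K)ˣ) : 𝓞 K) ^ s)
    (r : ℕ) (hr : 1 ≤ r) (hdr3 : 3 < d r)
    (q : ℕ) (hq : 1 ≤ q) (hdvd : ((d r : ℤ) : 𝓞 K) ∣ (u : 𝓞 K) ^ q - 1) :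
    d r ∣ d q - 3 ∧ r < q :=
  stmt_14_general K v u hu d hd r hr q hq hdvd
end
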